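/- Fix x₀ ∈ X and suppose that for β-a.e. b ∈ B = E^ℕ, the random path (g_{b_1^n} x₀)_{n∈ℕ} is equidistributed with respect to m. Then for β-a.e. b ∈ B, the sequence ((g_{b_1^n} x₀, T^n b))_{n∈ℕ} in X × B is equidistributed with respect to the measure m ⊗ β. -/

import Mathlib

open MeasureTheory Filter Topology Uniformity
open scoped ENNReal

noncomputable section

/-- A sequence `z` in a topological space `Z` is equidistributed with respect to a Borel
measure `θ` if for every bounded continuous `f : Z → ℝ` the Birkhoff averages of `f` along
the sequence converge to `∫ f dθ`. -/
def Equidistributed {Z : Type*} [TopologicalSpace Z] [MeasurableSpace Z]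
    (z : ℕ → Z) (θ : Measure Z) : Prop :=
  ∀ f : BoundedContinuousFunction Z ℝ,
    Tendsto (fun N : ℕ => (N : ℝ)⁻¹ * ∑ n ∈ Finset.range N, f (z n)) atTop
      (𝓝 (∫ x, f x ∂θ))

/-- `β` is the Bernoulli measure `μ^{⊗ℕ}` on `E^ℕ`. -/
def IsBernoulli {E : Type*} [MeasurableSpace E] (μ : Measure E) (β : Measure (ℕ → E)) : Prop :=
  IsProbabilityMeasure β ∧
    ∀ (F : Finset ℕ) (s : ℕ → Set E), (∀ i ∈ F, MeasurableSet (s i)) →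
      β {b | ∀ i ∈ F, b i ∈ s i} = ∏ i ∈ F, μ (s i)

/-- `wordProd g b n = g_{b_n} ⋯ g_{b_1}` (with the 0-indexed convention `b_1 = b 0`). -/
def wordProd {G : Type*} [Monoid G] {E : Type*} (g : E → G) (b : ℕ → E) : ℕ → G
  | 0 => 1
  | n + 1 => g (b n) * wordProd g b n

namespace RWJE

variable {E : Type*} [MeasurableSpace E]

def cylSets (E : Type*) [MeasurableSpace E] : Set (Set (ℕ → E)) :=
  {S | ∃ (F : Finset ℕ) (s : ℕ → Set E),
    (∀ i ∈ F, MeasurableSet (s i)) ∧ S = {b | ∀ i ∈ F, b i ∈ s i}}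

lemma univ_mem_cylSets : Set.univ ∈ cylSets E :=
  ⟨∅, fun _ => Set.univ, by simp, by simp⟩

lemma measurableSet_cyl {F : Finset ℕ} {s : ℕ → Set E} (hs : ∀ i ∈ F, MeasurableSet (s i)) :
    MeasurableSet {b : ℕ → E | ∀ i ∈ F, b i ∈ s i} := by
  have : {b : ℕ → E | ∀ i ∈ F, b i ∈ s i} = ⋂ i ∈ F, (fun b : ℕ → E => b i) ⁻¹' s i := by
    ext b; simp
  rw [this]
  exact MeasurableSet.biInter F.countable_toSet fun i hi => measurable_pi_apply i (hs i hi)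

lemma isPiSystem_cylSets : IsPiSystem (cylSets E) := by
  rintro S ⟨F₁, s, hs, rfl⟩ T ⟨F₂, t, ht, rfl⟩ -
  classical
  refine ⟨F₁ ∪ F₂,
    fun i => (if i ∈ F₁ then s i else Set.univ) ∩ (if i ∈ F₂ then t i else Set.univ), ?_, ?_⟩
  · intro i _
    refine MeasurableSet.inter ?_ ?_ <;> split <;>
      first
        | exact hs _ ‹_›
        | exact ht _ ‹_›
        | exact MeasurableSet.univ
  · ext b
    simp only [Set.mem_inter_iff, Set.mem_setOf_eq, Finset.mem_union]
    constructor
    · rintro ⟨h1, h2⟩ i hi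
      constructor
      · rcases em (i ∈ F₁) with h | h
        · simpa [h] using h1 i h
        · simp [h]
      · rcases em (i ∈ F₂) with h | h
        · simpa [h] using h2 i h
        · simp [h]
    · intro h
      constructor
      · intro i hi
        have := (h i (Or.inl hi)).1
        simpa [hi] using this
      · intro i hi
        have := (h i (Or.inr hi)).2
        simpa [hi] using this

lemma isCountablySpanning_cylSets : IsCountablySpanning (cylSets E) :=
  ⟨fun _ => Set.univ, fun _ => univ_mem_cylSets, Set.iUnion_const _⟩

lemma generateFrom_cylSets :
    MeasurableSpace.generateFrom (cylSets E) = (MeasurableSpace.pi :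
      MeasurableSpace (ℕ → E)) := by
  apply le_antisymm
  · rw [MeasurableSpace.generateFrom_le_iff]
    rintro S ⟨F, s, hs, rfl⟩
    exact measurableSet_cyl hs
  · refine iSup_le fun i => ?_
    rintro S ⟨t, ht, rfl⟩
    refine MeasurableSpace.measurableSet_generateFrom ⟨{i}, fun _ => t, by simpa using ht, ?_⟩
    ext b; simp

def trunc (e₀ : E) (m : ℕ) (b : ℕ → E) : ℕ → E := fun i => if i < m then b i else e₀

lemma measurable_trunc (e₀ : E) (m : ℕ) : Measurable (trunc e₀ m) := by
  refine measurable_pi_lambda _ fun i => ?_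
  by_cases h : i < m <;> simp only [trunc, h, if_true, if_false]
  · exact measurable_pi_apply i
  · exact measurable_const

lemma measurable_shift (m : ℕ) : Measurable (fun b : ℕ → E => fun i => b (i + m)) :=
  measurable_pi_lambda _ fun i => measurable_pi_apply (i + m)

variable {μ : Measure E} {β : Measure (ℕ → E)}

lemma trunc_preimage_cyl (hβ : IsBernoulli μ β) (e₀ : E) (m : ℕ) {F : Finset ℕ} {s : ℕ → Set E}
    (hs : ∀ i ∈ F, MeasurableSet (s i)) (hP : ∀ i ∈ F, ¬ i < m → e₀ ∈ s i) :
    trunc e₀ m ⁻¹' {b | ∀ i ∈ F, b i ∈ s i}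
      = {b : ℕ → E | ∀ i ∈ F.filter (· < m), b i ∈ s i} := by
  ext b
  simp only [Set.mem_preimage, Set.mem_setOf_eq, Finset.mem_filter]
  constructor
  · rintro h i ⟨hiF, him⟩
    have := h i hiF
    simpa [trunc, him] using this
  · intro h i hiF
    by_cases him : i < m
    · simpa [trunc, him] using h i ⟨hiF, him⟩
    · simpa [trunc, him] using hP i hiF him

lemma trunc_preimage_cyl_empty (e₀ : E) (m : ℕ) {F : Finset ℕ} {s : ℕ → Set E}
    {i₀ : ℕ} (hi₀ : i₀ ∈ F) (him : ¬ i₀ < m) (he : e₀ ∉ s i₀) :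
    trunc e₀ m ⁻¹' {b | ∀ i ∈ F, b i ∈ s i} = ∅ := by
  ext b
  simp only [Set.mem_preimage, Set.mem_setOf_eq, Set.mem_empty_iff_false, iff_false, not_forall]
  refine ⟨i₀, hi₀, ?_⟩
  simpa [trunc, him] using he

lemma map_split (hβ : IsBernoulli μ β) (e₀ : E) (m : ℕ) :
    Measure.map (fun b => (trunc e₀ m b, fun i => b (i + m))) β
      = (Measure.map (trunc e₀ m) β).prod β := by
  classical
  haveI : IsProbabilityMeasure β := hβ.1
  haveI : IsProbabilityMeasure (Measure.map (trunc e₀ m) β) :=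
    Measure.isProbabilityMeasure_map (measurable_trunc e₀ m).aemeasurable
  have hsplit : Measurable (fun b : ℕ → E => (trunc e₀ m b, fun i => b (i + m))) :=
    (measurable_trunc e₀ m).prodMk (measurable_shift m)
  haveI : IsProbabilityMeasure (Measure.map (fun b : ℕ → E => (trunc e₀ m b, fun i => b (i + m))) β) :=
    Measure.isProbabilityMeasure_map hsplit.aemeasurable
  refine ext_of_generate_finite _
    (generateFrom_eq_prod generateFrom_cylSets generateFrom_cylSets
      isCountablySpanning_cylSets isCountablySpanning_cylSets).symm
    (isPiSystem_cylSets.prod isPiSystem_cylSets) ?_ (by simp [measure_univ])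
  rintro _ ⟨S₁, ⟨F₁, s, hs, rfl⟩, S₂, ⟨F₂, t, ht, rfl⟩, rfl⟩
  have hm₁ : MeasurableSet {b : ℕ → E | ∀ i ∈ F₁, b i ∈ s i} := measurableSet_cyl hs
  have hm₂ : MeasurableSet {b : ℕ → E | ∀ i ∈ F₂, b i ∈ t i} := measurableSet_cyl ht
  rw [Measure.map_apply hsplit (hm₁.prod hm₂), Measure.prod_prod,
    Measure.map_apply (measurable_trunc e₀ m) hm₁, Set.mk_preimage_prod]
  by_cases hP : ∀ i ∈ F₁, ¬ i < m → e₀ ∈ s i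
  · rw [trunc_preimage_cyl hβ e₀ m hs hP]
    have hpre : (fun b : ℕ → E => fun i => b (i + m)) ⁻¹' {b | ∀ i ∈ F₂, b i ∈ t i}
        = {b : ℕ → E | ∀ j ∈ F₂.image (· + m), b j ∈ t (j - m)} := by
      ext b
      simp only [Set.mem_preimage, Set.mem_setOf_eq, Finset.mem_image]
      constructor
      · rintro h j ⟨i, hi, rfl⟩
        simpa using h i hi
      · intro h i hi
        simpa using h (i + m) ⟨i, hi, rfl⟩
    rw [hpre]
    set u : ℕ → Set E := fun i => if i < m then s i else t (i - m) with hu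
    have hdisj : Disjoint (F₁.filter (· < m)) (F₂.image (· + m)) := by
      rw [Finset.disjoint_left]
      rintro a ha hb
      rcases Finset.mem_filter.1 ha with ⟨-, ham⟩
      rcases Finset.mem_image.1 hb with ⟨i, -, rfl⟩
      omega
    have hinter : {b : ℕ → E | ∀ i ∈ F₁.filter (· < m), b i ∈ s i}
        ∩ {b : ℕ → E | ∀ j ∈ F₂.image (· + m), b j ∈ t (j - m)}
        = {b : ℕ → E | ∀ i ∈ F₁.filter (· < m) ∪ F₂.image (· + m), b i ∈ u i} := by
      ext b
      simp only [Set.mem_inter_iff, Set.mem_setOf_eq, Finset.mem_union]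
      constructor
      · rintro ⟨h1, h2⟩ i hi
        rcases hi with hi | hi
        · have him : i < m := (Finset.mem_filter.1 hi).2
          simpa [hu, him] using h1 i hi
        · rcases Finset.mem_image.1 hi with ⟨j, hj, rfl⟩
          have : ¬ j + m < m := by omega
          simpa [hu, this] using h2 (j + m) hi
      · intro h
        constructor
        · intro i hi
          have him : i < m := (Finset.mem_filter.1 hi).2
          simpa [hu, him] using h i (Or.inl hi)
        · intro j hj
          rcases Finset.mem_image.1 hj with ⟨i, hi, rfl⟩
          have : ¬ i + m < m := by omega
          simpa [hu, this] using h (i + m) (Or.inr hj)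
    rw [hinter, hβ.2 _ _ ?_, hβ.2 _ _ (fun i hi => hs i (Finset.mem_filter.1 hi).1),
      hβ.2 _ _ ht, Finset.prod_union hdisj]
    · congr 1
      · refine Finset.prod_congr rfl fun i hi => ?_
        have him : i < m := (Finset.mem_filter.1 hi).2
        simp [hu, him]
      · rw [Finset.prod_image (fun i _ j _ h => by omega)]
        refine Finset.prod_congr rfl fun i hi => ?_
        have : ¬ i + m < m := by omega
        simp [hu, this]
    · intro i hi
      rcases Finset.mem_union.1 hi with hi | hi
      · have him : i < m := (Finset.mem_filter.1 hi).2
        have : MeasurableSet (s i) := hs i (Finset.mem_filter.1 hi).1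
        simpa [hu, him] using this
      · rcases Finset.mem_image.1 hi with ⟨j, hj, rfl⟩
        have : ¬ j + m < m := by omega
        simpa [hu, this] using ht j hj
  · push_neg at hP
    obtain ⟨i₀, hi₀, him, he⟩ := hP
    rw [trunc_preimage_cyl_empty e₀ m hi₀ (by omega) he]
    simp

lemma continuous_trunc {E : Type*} [TopologicalSpace E] (e₀ : E) (m : ℕ) :
    Continuous (trunc e₀ m) := by
  refine continuous_pi fun i => ?_
  by_cases h : i < m <;> simp only [trunc, h, if_true, if_false]
  · exact continuous_apply i
  · exact continuous_const

lemma trunc_congr {E : Type*} (e₀ : E) (m : ℕ) {b b' : ℕ → E} (h : ∀ i < m, b i = b' i) :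
    trunc e₀ m b = trunc e₀ m b' := by
  funext i
  by_cases hi : i < m <;> simp only [trunc, hi, if_true, if_false]
  exact h i hi

set_option maxHeartbeats 1000000 in
lemma core
    {X : Type*} [MetricSpace X] [MeasurableSpace X] [BorelSpace X]
    {E : Type*} [MetricSpace E] [SecondCountableTopology E] [MeasurableSpace E] [BorelSpace E]
    {μ : Measure E} {β : Measure (ℕ → E)} (hβ : IsBernoulli μ β) (e₀ : E)
    (x : (ℕ → E) → ℕ → X)
    (hxc : ∀ n, Continuous fun b => x b n)
    (hxdep : ∀ n, ∀ b b' : ℕ → E, (∀ i < n, b i = b' i) → x b n = x b' n)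
    (H : X → (ℕ → E) → ℝ) (C : ℝ) (k : ℕ)
    (hHc : Continuous fun p : X × (ℕ → E) => H p.1 p.2)
    (hHb : ∀ y c, |H y c| ≤ C)
    (hHcyl : ∀ y c c', (∀ i < k, c i = c' i) → H y c = H y c') :
    ∀ᵐ b ∂β, Tendsto (fun N : ℕ => (N : ℝ)⁻¹ *
        ∑ n ∈ Finset.range N, (H (x b n) (fun i => b (i + n)) - ∫ c, H (x b n) c ∂β))
      atTop (𝓝 0) := by
  classical
  haveI hprob : IsProbabilityMeasure β := hβ.1
  set hbar : X → ℝ := fun y => ∫ c, H y c ∂β with hbar_def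
  have hC0 : 0 ≤ C := le_trans (abs_nonneg _) (hHb (x (fun _ => e₀) 0) (fun _ => e₀))
  have hHcont_y : ∀ y : X, Continuous fun c => H y c :=
    fun y => hHc.comp (Continuous.prodMk continuous_const continuous_id)
  have hHint : ∀ y : X, Integrable (fun c => H y c) β := fun y =>
    (integrable_const C).mono' (hHcont_y y).aestronglyMeasurable
      (Filter.Eventually.of_forall fun c => by simpa [Real.norm_eq_abs] using hHb y c)
  have hbar_cont : Continuous hbar := by
    refine continuous_of_dominated (fun y => (hHcont_y y).aestronglyMeasurable)
      (fun y => Filter.Eventually.of_forall fun c => by simpa [Real.norm_eq_abs] using hHb y c)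
      (integrable_const C) ?_
    exact Filter.Eventually.of_forall fun c => hHc.comp (continuous_id.prodMk continuous_const)
  have hbar_le : ∀ y, |hbar y| ≤ C := by
    intro y
    rw [← Real.norm_eq_abs]
    calc ‖∫ c, H y c ∂β‖ ≤ C * (β Set.univ).toReal := norm_integral_le_of_norm_le_const
          (Filter.Eventually.of_forall fun c => by simpa [Real.norm_eq_abs] using hHb y c)
      _ = C := by simp [measure_univ]
  set w : ℕ → (ℕ → E) → ℝ := fun n b => H (x b n) (fun i => b (i + n)) - hbar (x b n) with w_def
  have hshiftc : ∀ n : ℕ, Continuous fun b : ℕ → E => (fun i => b (i + n)) :=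
    fun n => continuous_pi fun i => continuous_apply (i + n)
  have hwc : ∀ n, Continuous (w n) := fun n =>
    (hHc.comp ((hxc n).prodMk (hshiftc n))).sub (hbar_cont.comp (hxc n))
  have hwb : ∀ n b, |w n b| ≤ 2 * C := by
    intro n b
    have h1 := abs_le.1 (hHb (x b n) (fun i => b (i + n)))
    have h2 := abs_le.1 (hbar_le (x b n))
    rw [abs_le]
    constructor <;> simp only [w_def] <;> linarith [h1.1, h1.2, h2.1, h2.2]
  -- orthogonality
  have horth : ∀ n n' : ℕ, n + k ≤ n' → ∫ b, w n b * w n' b ∂β = 0 := by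
    intro n n' hnn'
    set ν := Measure.map (trunc e₀ n') β with hν
    haveI : IsProbabilityMeasure ν :=
      Measure.isProbabilityMeasure_map (measurable_trunc e₀ n').aemeasurable
    set G : (ℕ → E) × (ℕ → E) → ℝ :=
      fun p => w n p.1 * (H (x p.1 n') p.2 - hbar (x p.1 n')) with hG
    have hGc : Continuous G := by
      refine Continuous.mul ((hwc n).comp continuous_fst) ?_
      exact (hHc.comp (((hxc n').comp continuous_fst).prodMk continuous_snd)).sub
        ((hbar_cont.comp ((hxc n').comp continuous_fst)))
    have hGb : ∀ p, ‖G p‖ ≤ (2*C) * (2*C) := by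
      intro p
      rw [Real.norm_eq_abs, hG]
      simp only []
      rw [abs_mul]
      have h1 := abs_le.1 (hHb (x p.1 n') p.2)
      have h2 := abs_le.1 (hbar_le (x p.1 n'))
      have h3 : |H (x p.1 n') p.2 - hbar (x p.1 n')| ≤ 2*C := by
        rw [abs_le]; constructor <;> linarith [h1.1, h1.2, h2.1, h2.2]
      exact mul_le_mul (hwb n p.1) h3 (abs_nonneg _) (by linarith)
    have hfac : ∀ b, w n b * w n' b = G (trunc e₀ n' b, fun i => b (i + n')) := by
      intro b
      have hxn : x (trunc e₀ n' b) n = x b n :=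
        hxdep n _ _ fun i hi => by simp [trunc, show i < n' by omega]
      have hxn' : x (trunc e₀ n' b) n' = x b n' :=
        hxdep n' _ _ fun i hi => by simp [trunc, hi]
      have hHn : H (x b n) (fun i => trunc e₀ n' b (i + n)) = H (x b n) (fun i => b (i + n)) :=
        hHcyl _ _ _ fun i hi => by simp [trunc, show i + n < n' by omega]
      simp only [hG, w_def, hxn, hxn', hHn]
    have hGi : Integrable G (ν.prod β) :=
      (integrable_const ((2*C) * (2*C))).mono' hGc.aestronglyMeasurable
        (Filter.Eventually.of_forall hGb)
    calc ∫ b, w n b * w n' b ∂β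
        = ∫ b, G (trunc e₀ n' b, fun i => b (i + n')) ∂β := by simp only [hfac]
      _ = ∫ p, G p ∂(Measure.map (fun b => (trunc e₀ n' b, fun i => b (i + n'))) β) :=
          (integral_map ((measurable_trunc e₀ n').prodMk (measurable_shift n')).aemeasurable
            hGc.aestronglyMeasurable).symm
      _ = ∫ p, G p ∂(ν.prod β) := by rw [map_split hβ]
      _ = ∫ a, ∫ c, G (a, c) ∂β ∂ν := integral_prod _ hGi
      _ = 0 := by
          have hinner : ∀ a, ∫ c, G (a, c) ∂β = 0 := by
            intro a
            simp only [hG]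
            rw [integral_const_mul, integral_sub (hHint _) (integrable_const _), integral_const]
            simp [measure_univ, hbar_def]
          simp [hinner]
  -- variance
  set A := (2*C) * (2*C) with hA
  have hA0 : 0 ≤ A := by positivity
  have hwwi : ∀ n n', Integrable (fun b => w n b * w n' b) β := fun n n' =>
    (integrable_const A).mono' ((hwc n).mul (hwc n')).aestronglyMeasurable
      (Filter.Eventually.of_forall fun b => by
        rw [Real.norm_eq_abs, abs_mul]
        exact mul_le_mul (hwb _ _) (hwb _ _) (abs_nonneg _) (by linarith))
  have hterm : ∀ n n' : ℕ, ∫ b, w n b * w n' b ∂β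
      ≤ if n' ∈ Finset.Icc (n - k) (n + k) then A else 0 := by
    intro n n'
    by_cases h : n' ∈ Finset.Icc (n - k) (n + k)
    · simp only [h, if_true]
      calc ∫ b, w n b * w n' b ∂β ≤ |∫ b, w n b * w n' b ∂β| := le_abs_self _
        _ ≤ A * (β Set.univ).toReal := by
            rw [← Real.norm_eq_abs]
            exact norm_integral_le_of_norm_le_const (Filter.Eventually.of_forall fun b => by
              rw [Real.norm_eq_abs, abs_mul]
              exact mul_le_mul (hwb _ _) (hwb _ _) (abs_nonneg _) (by linarith))
        _ = A := by simp [measure_univ]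
    · simp only [h, if_false]
      rw [Finset.mem_Icc, not_and_or] at h
      rcases h with h | h
      · push_neg at h
        have hcomm : (∫ b, w n b * w n' b ∂β) = ∫ b, w n' b * w n b ∂β := by
          congr 1; funext b; ring
        rw [hcomm, horth n' n (by omega)]
      · push_neg at h
        rw [horth n n' (by omega)]
  have hvar : ∀ N : ℕ, ∫ b, (∑ n ∈ Finset.range N, w n b)^2 ∂β
      ≤ (N : ℝ) * ((2*(k:ℝ)+1) * A) := by
    intro N
    have hexp : ∀ b : ℕ → E, (∑ n ∈ Finset.range N, w n b)^2
        = ∑ n ∈ Finset.range N, ∑ n' ∈ Finset.range N, w n b * w n' b := by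
      intro b; rw [sq, Finset.sum_mul_sum]
    calc ∫ b, (∑ n ∈ Finset.range N, w n b)^2 ∂β
        = ∑ n ∈ Finset.range N, ∑ n' ∈ Finset.range N, ∫ b, w n b * w n' b ∂β := by
          simp_rw [hexp]
          rw [integral_finset_sum _ fun n _ => integrable_finset_sum _ fun n' _ => hwwi n n']
          exact Finset.sum_congr rfl fun n _ => integral_finset_sum _ fun n' _ => hwwi n n'
      _ ≤ ∑ _n ∈ Finset.range N, ((2*(k:ℝ)+1) * A) := by
          refine Finset.sum_le_sum fun n _ => ?_
          calc ∑ n' ∈ Finset.range N, ∫ b, w n b * w n' b ∂β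
              ≤ ∑ n' ∈ Finset.range N, (if n' ∈ Finset.Icc (n-k) (n+k) then A else 0) :=
                Finset.sum_le_sum fun n' _ => hterm n n'
            _ = ∑ _n' ∈ Finset.range N ∩ Finset.Icc (n-k) (n+k), A := Finset.sum_ite_mem _ _ _
            _ ≤ (2*(k:ℝ)+1) * A := by
                rw [Finset.sum_const, nsmul_eq_mul]
                have hcard : (Finset.range N ∩ Finset.Icc (n-k) (n+k)).card ≤ 2*k+1 := by
                  calc (Finset.range N ∩ Finset.Icc (n-k) (n+k)).card
                      ≤ (Finset.Icc (n-k) (n+k)).card :=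
                        Finset.card_le_card Finset.inter_subset_right
                    _ = (n+k) + 1 - (n-k) := Nat.card_Icc _ _
                    _ ≤ 2*k+1 := by omega
                refine mul_le_mul_of_nonneg_right ?_ hA0
                calc ((Finset.range N ∩ Finset.Icc (n-k) (n+k)).card : ℝ)
                    ≤ ((2*k+1 : ℕ) : ℝ) := by exact_mod_cast hcard
                  _ = 2*(k:ℝ)+1 := by push_cast; ring
      _ = (N : ℝ) * ((2*(k:ℝ)+1) * A) := by
          rw [Finset.sum_const, Finset.card_range, nsmul_eq_mul]
  -- the averages
  set S : ℕ → (ℕ → E) → ℝ := fun N b => (N : ℝ)⁻¹ * ∑ n ∈ Finset.range N, w n b with hS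
  have hSmeas : ∀ N, Measurable (S N) := fun N =>
    measurable_const.mul (Finset.measurable_sum _ fun n _ => (hwc n).measurable)
  have hSb : ∀ N b, |S N b| ≤ 2*C := by
    intro N b
    have hsum : |∑ n ∈ Finset.range N, w n b| ≤ (N : ℝ) * (2*C) := by
      calc |∑ n ∈ Finset.range N, w n b| ≤ ∑ n ∈ Finset.range N, |w n b| :=
            Finset.abs_sum_le_sum_abs _ _
        _ ≤ ∑ _n ∈ Finset.range N, (2*C) := Finset.sum_le_sum fun n _ => hwb n b
        _ = (N : ℝ) * (2*C) := by rw [Finset.sum_const, Finset.card_range, nsmul_eq_mul]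
    rcases Nat.eq_zero_or_pos N with h | h
    · simp only [hS, h]; simp; positivity
    · have hNpos : (0:ℝ) < (N:ℝ) := by exact_mod_cast h
      simp only [hS]
      rw [abs_mul, abs_inv, Nat.abs_cast]
      calc (N:ℝ)⁻¹ * |∑ n ∈ Finset.range N, w n b| ≤ (N:ℝ)⁻¹ * ((N:ℝ) * (2*C)) :=
            mul_le_mul_of_nonneg_left hsum (by positivity)
        _ = 2*C := by field_simp
  have hSint : ∀ N, Integrable (fun b => (S N b)^2) β := fun N =>
    (integrable_const ((2*C)^2)).mono' ((hSmeas N).pow_const 2).aestronglyMeasurable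
      (Filter.Eventually.of_forall fun b => by
        rw [Real.norm_eq_abs, abs_pow]
        exact pow_le_pow_left₀ (abs_nonneg _) (hSb N b) 2)
  have hSvar : ∀ j : ℕ, ∫ b, (S ((j+1)^2) b)^2 ∂β ≤ ((2*(k:ℝ)+1) * A) / (((j:ℝ)+1)^2) := by
    intro j
    have hNcast : (((j+1)^2 : ℕ) : ℝ) = ((j:ℝ)+1)^2 := by push_cast; ring
    have hNpos : (0:ℝ) < (((j+1)^2 : ℕ) : ℝ) := by positivity
    have hrw : ∀ b, (S ((j+1)^2) b)^2
        = ((((j+1)^2 : ℕ) : ℝ)⁻¹)^2 * (∑ n ∈ Finset.range ((j+1)^2), w n b)^2 := by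
      intro b; simp only [hS]; ring
    simp_rw [hrw]
    rw [integral_const_mul]
    calc ((((j+1)^2 : ℕ) : ℝ)⁻¹)^2 * ∫ b, (∑ n ∈ Finset.range ((j+1)^2), w n b)^2 ∂β
        ≤ ((((j+1)^2 : ℕ) : ℝ)⁻¹)^2 * ((((j+1)^2 : ℕ) : ℝ) * ((2*(k:ℝ)+1) * A)) :=
          mul_le_mul_of_nonneg_left (hvar _) (by positivity)
      _ = ((2*(k:ℝ)+1) * A) / (((j:ℝ)+1)^2) := by
          rw [← hNcast]; field_simp
  have hsum2 : Summable (fun j : ℕ => ((2*(k:ℝ)+1) * A) / (((j:ℝ)+1)^2)) := by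
    have h1 : Summable (fun n : ℕ => 1 / (n:ℝ)^2) :=
      Real.summable_one_div_nat_pow.2 one_lt_two
    have h2 : Summable (fun n : ℕ => 1 / ((n:ℝ)+1)^2) := by
      have := (summable_nat_add_iff 1).2 h1
      refine this.congr fun n => ?_
      push_cast; ring
    have := h2.mul_left ((2*(k:ℝ)+1) * A)
    refine this.congr fun n => ?_
    rw [mul_one_div]
  have haes : ∀ᵐ b ∂β, Tendsto (fun j : ℕ => |S ((j+1)^2) b|) atTop (𝓝 0) := by
    set g : ℕ → (ℕ → E) → ℝ≥0∞ := fun j b => ENNReal.ofReal ((S ((j+1)^2) b)^2) with hg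
    have hgmeas : ∀ j, Measurable (g j) := fun j => ((hSmeas _).pow_const 2).ennreal_ofReal
    have hkey : ∫⁻ b, ∑' j, g j b ∂β < ⊤ := by
      rw [lintegral_tsum fun j => (hgmeas j).aemeasurable]
      calc ∑' j, ∫⁻ b, g j b ∂β
          ≤ ∑' j : ℕ, ENNReal.ofReal (((2*(k:ℝ)+1) * A) / (((j:ℝ)+1)^2)) := by
            refine ENNReal.tsum_le_tsum fun j => ?_
            rw [hg]
            simp only []
            rw [← ofReal_integral_eq_lintegral_ofReal (hSint _)
              (Filter.Eventually.of_forall fun b => sq_nonneg _)]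
            exact ENNReal.ofReal_le_ofReal (hSvar j)
        _ = ENNReal.ofReal (∑' j : ℕ, ((2*(k:ℝ)+1) * A) / (((j:ℝ)+1)^2)) :=
            (ENNReal.ofReal_tsum_of_nonneg (fun j => by positivity) hsum2).symm
        _ < ⊤ := ENNReal.ofReal_lt_top
    have hae1 : ∀ᵐ b ∂β, ∑' j, g j b < ⊤ :=
      ae_lt_top (Measurable.ennreal_tsum hgmeas) hkey.ne
    filter_upwards [hae1] with b hb
    have hsummable : Summable fun j => (g j b).toReal := ENNReal.summable_toReal hb.ne
    have heq : ∀ j, (g j b).toReal = (S ((j+1)^2) b)^2 := fun j =>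
      ENNReal.toReal_ofReal (sq_nonneg _)
    rw [funext heq] at hsummable
    have h0 : Tendsto (fun j => (S ((j+1)^2) b)^2) atTop (𝓝 0) :=
      hsummable.tendsto_atTop_zero
    have := (Real.continuous_sqrt.tendsto' 0 0 (by simp)).comp h0
    simpa [Function.comp_def, Real.sqrt_sq_eq_abs] using this
  -- gap filling
  filter_upwards [haes] with b hb
  have hb0 : Tendsto (fun j : ℕ => |S (j^2) b|) atTop (𝓝 0) :=
    (tendsto_add_atTop_iff_nat 1).1 hb
  have hsqrt : Tendsto Nat.sqrt atTop atTop :=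
    tendsto_atTop_atTop.2 fun m => ⟨m*m, fun N h => Nat.le_sqrt.2 h⟩
  have t1 : Tendsto (fun N => |S ((Nat.sqrt N)^2) b|) atTop (𝓝 0) := hb0.comp hsqrt
  have t2 : Tendsto (fun N : ℕ => 4*C/((Nat.sqrt N : ℕ) : ℝ)) atTop (𝓝 0) :=
    Tendsto.div_atTop tendsto_const_nhds (tendsto_natCast_atTop_atTop.comp hsqrt)
  have hub : ∀ᶠ N in atTop, |S N b| ≤ |S ((Nat.sqrt N)^2) b| + 4*C/((Nat.sqrt N : ℕ) : ℝ) := by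
    filter_upwards [eventually_ge_atTop 1] with N hN
    set j := Nat.sqrt N with hj
    have hj1 : 1 ≤ j := Nat.le_sqrt.2 (by omega)
    have hjN : j^2 ≤ N := Nat.sqrt_le' N
    have hNj : N < (j+1)^2 := Nat.lt_succ_sqrt' N
    have hgap : N - j^2 ≤ 2*j := by
      have e1 : j * j ≤ N := by
        calc j * j = j^2 := (sq j).symm
        _ ≤ N := hjN
      have e2 : N < j*j + 2*j + 1 := by
        calc N < (j+1)^2 := hNj
        _ = j*j + 2*j + 1 := by ring
      have e3 : N - j^2 = N - j*j := by rw [pow_two]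
      omega
    have hNpos : (0:ℝ) < (N:ℝ) := by exact_mod_cast (by omega : 0 < N)
    have hjpos : (0:ℝ) < (j:ℝ) := by exact_mod_cast hj1
    set a := |S (j^2) b| with ha
    have ha0 : 0 ≤ a := abs_nonneg _
    have hdec : ∑ n ∈ Finset.range N, w n b
        = (∑ n ∈ Finset.range (j^2), w n b) + ∑ n ∈ Finset.Ico (j^2) N, w n b := by
      rw [Finset.range_eq_Ico, Finset.range_eq_Ico, Finset.sum_Ico_consecutive _ (Nat.zero_le _) hjN]
    have hfirst : |∑ n ∈ Finset.range (j^2), w n b| = ((j^2 : ℕ) : ℝ) * a := by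
      have hj2pos : (0:ℝ) < ((j^2 : ℕ) : ℝ) := by positivity
      rw [ha]
      simp only [hS]
      rw [abs_mul, abs_inv, Nat.abs_cast, ← mul_assoc, mul_inv_cancel₀ (ne_of_gt hj2pos), one_mul]
    have hsecond : |∑ n ∈ Finset.Ico (j^2) N, w n b| ≤ 2*(j:ℝ) * (2*C) := by
      calc |∑ n ∈ Finset.Ico (j^2) N, w n b| ≤ ∑ n ∈ Finset.Ico (j^2) N, |w n b| :=
            Finset.abs_sum_le_sum_abs _ _
        _ ≤ ∑ _n ∈ Finset.Ico (j^2) N, (2*C) := Finset.sum_le_sum fun n _ => hwb n b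
        _ = ((N - j^2 : ℕ) : ℝ) * (2*C) := by
            rw [Finset.sum_const, Nat.card_Ico, nsmul_eq_mul]
        _ ≤ 2*(j:ℝ) * (2*C) := by
            refine mul_le_mul_of_nonneg_right ?_ (by linarith)
            calc ((N - j^2 : ℕ) : ℝ) ≤ ((2*j : ℕ) : ℝ) := by exact_mod_cast hgap
              _ = 2*(j:ℝ) := by push_cast; ring
    have hstep : |S N b| ≤ (((j^2 : ℕ) : ℝ) * a + 4*C*(j:ℝ)) / (N:ℝ) := by
      simp only [hS]
      rw [abs_mul, abs_inv, Nat.abs_cast, hdec, inv_mul_eq_div, div_le_div_iff₀ hNpos hNpos]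
      have habs : |(∑ n ∈ Finset.range (j^2), w n b) + ∑ n ∈ Finset.Ico (j^2) N, w n b|
          ≤ ((j^2 : ℕ) : ℝ) * a + 4*C*(j:ℝ) := by
        calc |(∑ n ∈ Finset.range (j^2), w n b) + ∑ n ∈ Finset.Ico (j^2) N, w n b|
            ≤ |∑ n ∈ Finset.range (j^2), w n b| + |∑ n ∈ Finset.Ico (j^2) N, w n b| :=
              abs_add_le _ _
          _ ≤ ((j^2 : ℕ) : ℝ) * a + 2*(j:ℝ) * (2*C) := by
              rw [hfirst]; exact add_le_add_right hsecond _
          _ = ((j^2 : ℕ) : ℝ) * a + 4*C*(j:ℝ) := by ring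
      exact mul_le_mul_of_nonneg_right habs (le_of_lt hNpos)
    have hstep2 : (((j^2 : ℕ) : ℝ) * a + 4*C*(j:ℝ)) / (N:ℝ) ≤ a + 4*C/(j:ℝ) := by
      rw [div_le_iff₀ hNpos]
      have hj2N : ((j^2 : ℕ) : ℝ) ≤ (N:ℝ) := by exact_mod_cast hjN
      have hcast : ((j^2 : ℕ) : ℝ) = (j:ℝ)^2 := by push_cast; ring
      have hmono : (a + 4*C/(j:ℝ)) * ((j:ℝ)^2) ≤ (a + 4*C/(j:ℝ)) * (N:ℝ) := by
        refine mul_le_mul_of_nonneg_left ?_ (by positivity)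
        rw [← hcast]; exact hj2N
      have hexp : (a + 4*C/(j:ℝ)) * ((j:ℝ)^2) = a * (j:ℝ)^2 + 4*C*(j:ℝ) := by
        field_simp
      rw [hcast]
      nlinarith [hmono, hexp]
    exact hstep.trans hstep2
  have habs : Tendsto (fun N => |S N b|) atTop (𝓝 0) := by
    have hupper : Tendsto
        (fun N => |S ((Nat.sqrt N)^2) b| + 4*C/((Nat.sqrt N : ℕ) : ℝ)) atTop (𝓝 0) := by
      simpa using t1.add t2
    exact tendsto_of_tendsto_of_tendsto_of_le_of_le'
      tendsto_const_nhds hupper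
      (Filter.Eventually.of_forall fun N => abs_nonneg _) hub
  have hfinal : Tendsto (fun N => S N b) atTop (𝓝 0) := by
    have hneg : Tendsto (fun N => -|S N b|) atTop (𝓝 0) := by simpa using habs.neg
    exact tendsto_of_tendsto_of_tendsto_of_le_of_le hneg habs
      (fun N => neg_abs_le _) (fun N => le_abs_self _)
  exact hfinal

end RWJE

open RWJE

set_option maxHeartbeats 1600000 in
/-- **Theorem.** Let `G` be a locally compact second countable group acting continuously on
a locally compact second countable metric space `X`, preserving an ergodic Borel
probability measure `m`.  Let `μ` be a Borel probability measure with full support on a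
compact metric space `E`, `e ↦ g_e` continuous from `E` to `G`, and `β = μ^{⊗ℕ}`.  Fix
`x₀ ∈ X` and suppose that for `β`-a.e. `b`, the random path `(g_{b_1^n} x₀)ₙ` is
equidistributed with respect to `m`.  Then for `β`-a.e. `b`, the sequence
`((g_{b_1^n} x₀, Tⁿ b))ₙ` is equidistributed in `X × E^ℕ` with respect to `m ⊗ β`. -/
theorem random_walk_joint_equidistribution_with_shift
    {X : Type*} [MetricSpace X] [LocallyCompactSpace X] [SecondCountableTopology X]
    [MeasurableSpace X] [BorelSpace X]
    {G : Type*} [Group G] [TopologicalSpace G] [IsTopologicalGroup G]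
    [LocallyCompactSpace G] [SecondCountableTopology G]
    [MulAction G X] [ContinuousSMul G X]
    (m : Measure X) [IsProbabilityMeasure m]
    (hminv : ∀ g : G, Measure.map (fun x => g • x) m = m)
    (herg : ∀ s : Set X, MeasurableSet s → (∀ g : G, (fun x => g • x) ⁻¹' s = s) →
      m s = 0 ∨ m s = 1)
    {E : Type*} [MetricSpace E] [CompactSpace E] [Nonempty E]
    [MeasurableSpace E] [BorelSpace E]
    (gmap : E → G) (hgcont : Continuous gmap)
    (μ : Measure E) [IsProbabilityMeasure μ]
    (hsupp : ∀ U : Set E, IsOpen U → U.Nonempty → μ U ≠ 0)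
    (β : Measure (ℕ → E)) (hβ : IsBernoulli μ β)
    (x₀ : X)
    (hx₀ : ∀ᵐ b ∂β, Equidistributed (fun n => wordProd gmap b n • x₀) m) :
    ∀ᵐ b ∂β,
      Equidistributed (fun n => (wordProd gmap b n • x₀, fun i => b (i + n)))
        (m.prod β) := by
  classical
  haveI hprobβ : IsProbabilityMeasure β := hβ.1
  obtain ⟨e₀⟩ := (inferInstance : Nonempty E)
  -- continuity and finite dependence of the path
  have hwpc : ∀ n, Continuous fun b : ℕ → E => wordProd gmap b n := by
    intro n
    induction n with
    | zero => exact continuous_const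
    | succ n ih =>
        show Continuous fun b : ℕ → E => gmap (b n) * wordProd gmap b n
        exact (hgcont.comp (continuous_apply n)).mul ih
  have hxc : ∀ n, Continuous fun b : ℕ → E => wordProd gmap b n • x₀ :=
    fun n => (hwpc n).smul continuous_const
  have hwp : ∀ n (b b' : ℕ → E), (∀ i < n, b i = b' i) →
      wordProd gmap b n = wordProd gmap b' n := by
    intro n
    induction n with
    | zero => intro b b' _; rfl
    | succ n ih =>
        intro b b' h
        show gmap (b n) * wordProd gmap b n = gmap (b' n) * wordProd gmap b' n
        rw [h n (by omega), ih b b' fun i hi => h i (by omega)]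
  have hxdep : ∀ n (b b' : ℕ → E), (∀ i < n, b i = b' i) →
      wordProd gmap b n • x₀ = wordProd gmap b' n • x₀ :=
    fun n b b' h => by rw [hwp n b b' h]
  -- compact exhaustion and approximating family
  set K : CompactExhaustion X := CompactExhaustion.choice X with hK
  set sr : ℕ → Set (X × (ℕ → E)) := fun r => (K r) ×ˢ (Set.univ : Set (ℕ → E)) with hsr
  have hsrcomp : ∀ r, IsCompact (sr r) := fun r => (K.isCompact r).prod isCompact_univ
  have hdense : ∀ r : ℕ, ∃ u : ℕ → C((sr r : Set (X × (ℕ → E))), ℝ), DenseRange u := by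
    intro r
    haveI := isCompact_iff_compactSpace.mp (hsrcomp r)
    exact TopologicalSpace.exists_dense_seq _
  choose u hu using hdense
  have hext : ∀ (r i : ℕ), ∃ g : BoundedContinuousFunction (X × (ℕ → E)) ℝ,
      (∀ p : (sr r : Set (X × (ℕ → E))), g p = u r i p) ∧
      (∀ c : ℝ, 0 ≤ c → (∀ p : (sr r : Set (X × (ℕ → E))), |u r i p| ≤ c) →
        ∀ q, |g q| ≤ c) := by
    intro r i
    haveI := isCompact_iff_compactSpace.mp (hsrcomp r)
    obtain ⟨g, hg1, hg2⟩ :=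
      (BoundedContinuousFunction.mkOfCompact (u r i)).exists_extension_norm_eq_of_isClosedEmbedding
        (hsrcomp r).isClosed.isClosedEmbedding_subtypeVal
    refine ⟨g, fun p => ?_, fun c hc hcb q => ?_⟩
    · have := congrFun hg2 p
      simpa using this
    · have h1 : ‖g‖ ≤ c := by
        rw [hg1, BoundedContinuousFunction.norm_mkOfCompact]
        refine (ContinuousMap.norm_le _ hc).2 fun p => ?_
        simpa [Real.norm_eq_abs] using hcb p
      calc |g q| = ‖g q‖ := (Real.norm_eq_abs _).symm
        _ ≤ ‖g‖ := BoundedContinuousFunction.norm_coe_le_norm g q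
        _ ≤ c := h1
  choose g hg1 hg2 using hext
  -- core convergence for the countable family
  have hcore : ∀ r i k : ℕ, ∀ᵐ b ∂β, Tendsto (fun N : ℕ => (N : ℝ)⁻¹ *
      ∑ n ∈ Finset.range N,
        ((fun y c => (g r i) (y, trunc e₀ k c)) (wordProd gmap b n • x₀) (fun j => b (j + n))
          - ∫ c, (fun y c => (g r i) (y, trunc e₀ k c)) (wordProd gmap b n • x₀) c ∂β))
      atTop (𝓝 0) := by
    intro r i k
    refine core hβ e₀ (fun b n => wordProd gmap b n • x₀) hxc hxdep
      (fun y c => (g r i) (y, trunc e₀ k c)) ‖g r i‖ k ?_ ?_ ?_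
    · exact (g r i).continuous.comp
        (continuous_fst.prodMk ((continuous_trunc e₀ k).comp continuous_snd))
    · intro y c
      rw [← Real.norm_eq_abs]
      exact (g r i).norm_coe_le_norm _
    · intro y c c' h
      rw [trunc_congr e₀ k h]
  have hae : ∀ᵐ b ∂β, Equidistributed (fun n => wordProd gmap b n • x₀) m ∧
      ∀ r i k : ℕ, Tendsto (fun N : ℕ => (N : ℝ)⁻¹ *
        ∑ n ∈ Finset.range N,
          ((g r i) (wordProd gmap b n • x₀, trunc e₀ k (fun j => b (j + n)))
            - ∫ c, (g r i) (wordProd gmap b n • x₀, trunc e₀ k c) ∂β)) atTop (𝓝 0) :=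
    hx₀.and (ae_all_iff.2 fun r => ae_all_iff.2 fun i => ae_all_iff.2 fun k => hcore r i k)
  filter_upwards [hae] with b hb
  intro f
  -- convergence of averages of each member of the family, with the limit identified
  have havg : ∀ r i k : ℕ, Tendsto (fun N : ℕ => (N : ℝ)⁻¹ *
      ∑ n ∈ Finset.range N, (g r i) (wordProd gmap b n • x₀, trunc e₀ k (fun j => b (j + n))))
      atTop (𝓝 (∫ p, (g r i) (p.1, trunc e₀ k p.2) ∂(m.prod β))) := by
    intro r i k
    have hHcont : Continuous fun p : X × (ℕ → E) => (g r i) (p.1, trunc e₀ k p.2) :=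
      (g r i).continuous.comp
        (continuous_fst.prodMk ((continuous_trunc e₀ k).comp continuous_snd))
    have hHb : ∀ y (c : ℕ → E), |(g r i) (y, trunc e₀ k c)| ≤ ‖g r i‖ := by
      intro y c
      rw [← Real.norm_eq_abs]
      exact (g r i).norm_coe_le_norm _
    have hHy : ∀ y : X, Continuous fun c : ℕ → E => (g r i) (y, trunc e₀ k c) :=
      fun y => hHcont.comp (Continuous.prodMk continuous_const continuous_id)
    have hbarc : Continuous fun y : X => ∫ c, (g r i) (y, trunc e₀ k c) ∂β := by
      refine continuous_of_dominated (fun y => (hHy y).aestronglyMeasurable)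
        (fun y => Filter.Eventually.of_forall fun c => by
          simpa [Real.norm_eq_abs] using hHb y c)
        (integrable_const ‖g r i‖) ?_
      exact Filter.Eventually.of_forall fun c =>
        hHcont.comp (continuous_id.prodMk continuous_const)
    have hbarb : ∀ y : X, ‖∫ c, (g r i) (y, trunc e₀ k c) ∂β‖ ≤ ‖g r i‖ := by
      intro y
      calc ‖∫ c, (g r i) (y, trunc e₀ k c) ∂β‖ ≤ ‖g r i‖ * (β Set.univ).toReal :=
            norm_integral_le_of_norm_le_const (Filter.Eventually.of_forall fun c => by
              simpa [Real.norm_eq_abs] using hHb y c)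
        _ = ‖g r i‖ := by simp [measure_univ]
    set hbarf := BoundedContinuousFunction.ofNormedAddCommGroup
      (fun y : X => ∫ c, (g r i) (y, trunc e₀ k c) ∂β) hbarc ‖g r i‖ hbarb with hbarf_def
    have h1 : Tendsto (fun N : ℕ => (N : ℝ)⁻¹ *
        ∑ n ∈ Finset.range N, ∫ c, (g r i) (wordProd gmap b n • x₀, trunc e₀ k c) ∂β)
        atTop (𝓝 (∫ y, ∫ c, (g r i) (y, trunc e₀ k c) ∂β ∂m)) := by
      have := hb.1 hbarf
      simpa [hbarf_def] using this
    have h2 := hb.2 r i k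
    have h3 := h2.add h1
    rw [zero_add] at h3
    have h4 : Tendsto (fun N : ℕ => (N : ℝ)⁻¹ *
        ∑ n ∈ Finset.range N, (g r i) (wordProd gmap b n • x₀, trunc e₀ k (fun j => b (j + n))))
        atTop (𝓝 (∫ y, ∫ c, (g r i) (y, trunc e₀ k c) ∂β ∂m)) := by
      refine h3.congr fun N => ?_
      rw [← mul_add, ← Finset.sum_add_distrib]
      congr 1
      refine Finset.sum_congr rfl fun n _ => ?_
      ring
    have hfub : ∫ p, (g r i) (p.1, trunc e₀ k p.2) ∂(m.prod β)
        = ∫ y, ∫ c, (g r i) (y, trunc e₀ k c) ∂β ∂m := by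
      have hint : Integrable (fun p : X × (ℕ → E) => (g r i) (p.1, trunc e₀ k p.2))
          (m.prod β) :=
        (integrable_const ‖g r i‖).mono' hHcont.aestronglyMeasurable
          (Filter.Eventually.of_forall fun p => by
            simpa [Real.norm_eq_abs] using hHb p.1 p.2)
      exact integral_prod _ hint
    rw [hfub]
    exact h4
  -- now the ε-argument for the given f
  rw [Metric.tendsto_atTop]
  intro ε hε
  set M := ‖f‖ with hM
  have hM0 : 0 ≤ M := norm_nonneg f
  set ε' : ℝ := min 1 (ε / (6*M + 9)) with hε'
  have hε'0 : 0 < ε' := lt_min one_pos (div_pos hε (by linarith))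
  have hε'1 : ε' ≤ 1 := min_le_left _ _
  have hε'2 : ε' * (6*M + 9) ≤ ε := by
    have := min_le_right (1:ℝ) (ε / (6*M + 9))
    rw [← hε'] at this
    calc ε' * (6*M+9) ≤ (ε / (6*M+9)) * (6*M+9) :=
          mul_le_mul_of_nonneg_right this (by linarith)
      _ = ε := by field_simp
  -- choose r₀ with m (K r₀) close to 1
  have hKm : Tendsto (fun n => (m (K n)).toReal) atTop (𝓝 1) := by
    have h1 : Tendsto (fun n => m (K n)) atTop (𝓝 (m (⋃ n, K n))) :=
      tendsto_measure_iUnion_atTop fun a b h => K.subset h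
    rw [K.iUnion_eq, measure_univ] at h1
    have := (ENNReal.tendsto_toReal (by simp : (1:ℝ≥0∞) ≠ ⊤)).comp h1
    simpa [Function.comp_def] using this
  obtain ⟨r₀, hr₀⟩ := (hKm.eventually (eventually_gt_nhds (by linarith : 1 - ε' < 1))).exists
  -- Urysohn function
  obtain ⟨f0, hf00, hf01, hf0mem⟩ := exists_continuous_zero_one_of_isClosed
    (K.isCompact r₀).isClosed (isOpen_interior.isClosed_compl)
    (Set.disjoint_left.2 fun y hy hyc => hyc (K.subset_interior_succ r₀ hy))
  set r : ℕ := r₀ + 1 with hr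
  have hf0out : ∀ y : X, y ∉ K r → f0 y = 1 := by
    intro y hy
    exact hf01 fun hyc => hy (interior_subset hyc)
  -- ∫ f0 ≤ ε'
  have hf0cont : Continuous fun y : X => f0 y := f0.continuous
  have hf0int : Integrable (fun y : X => f0 y) m :=
    (integrable_const (1:ℝ)).mono' hf0cont.aestronglyMeasurable
      (Filter.Eventually.of_forall fun y => by
        rw [Real.norm_eq_abs, abs_of_nonneg (hf0mem y).1]; exact (hf0mem y).2)
  have hintf0 : ∫ y, f0 y ∂m ≤ ε' := by
    have hmK : MeasurableSet (K r₀ : Set X) := (K.isCompact r₀).isClosed.measurableSet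
    have hle : ∀ y, f0 y ≤ ((K r₀ : Set X)ᶜ).indicator (fun _ => (1:ℝ)) y := by
      intro y
      by_cases hy : y ∈ (K r₀ : Set X)
      · have h0 : f0 y = 0 := by simpa using hf00 hy
        rw [Set.indicator_of_notMem (by simpa using hy), h0]
      · rw [Set.indicator_of_mem (by simpa using hy)]
        exact (hf0mem y).2
    calc ∫ y, f0 y ∂m ≤ ∫ y, ((K r₀ : Set X)ᶜ).indicator (fun _ => (1:ℝ)) y ∂m :=
          integral_mono hf0int ((integrable_const (1:ℝ)).indicator hmK.compl) hle
      _ = (m (K r₀ : Set X)ᶜ).toReal := by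
          rw [integral_indicator hmK.compl]; simp [Measure.real]
      _ ≤ ε' := by
          rw [prob_compl_eq_one_sub hmK,
            ENNReal.toReal_sub_of_le prob_le_one (by simp), ENNReal.toReal_one]
          linarith [hr₀]
  -- average of f0 along the path is eventually small
  set f0b := BoundedContinuousFunction.ofNormedAddCommGroup
    (fun y : X => f0 y) hf0cont 1 (fun y => by
      rw [Real.norm_eq_abs, abs_of_nonneg (hf0mem y).1]; exact (hf0mem y).2) with hf0b_def
  have hT0 : Tendsto (fun N : ℕ => (N : ℝ)⁻¹ * ∑ n ∈ Finset.range N, f0 (wordProd gmap b n • x₀))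
      atTop (𝓝 (∫ y, f0 y ∂m)) := by
    have := hb.1 f0b
    simpa [hf0b_def] using this
  have hA : ∀ᶠ (N : ℕ) in atTop, (N : ℝ)⁻¹ * ∑ n ∈ Finset.range N, f0 (wordProd gmap b n • x₀)
      ≤ 2*ε' := by
    have h1 : ∫ y, f0 y ∂m < 2*ε' := lt_of_le_of_lt hintf0 (by linarith)
    exact (hT0.eventually (eventually_lt_nhds h1)).mono fun N hN => le_of_lt hN
  -- choose an approximating u r i
  haveI hcs : CompactSpace (sr r : Set (X × (ℕ → E))) := isCompact_iff_compactSpace.mp (hsrcomp r)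
  set Fr : C((sr r : Set (X × (ℕ → E))), ℝ) :=
    ContinuousMap.restrict (sr r) (f.toContinuousMap) with hFr
  obtain ⟨i, hi⟩ := Metric.denseRange_iff.1 (hu r) Fr ε' hε'0
  have hclose : ∀ p : (sr r : Set (X × (ℕ → E))), |u r i p - f p| ≤ ε' := by
    intro p
    have h1 : dist (Fr p) ((u r i) p) ≤ dist Fr (u r i) := ContinuousMap.dist_apply_le_dist p
    have h2 : dist Fr (u r i) < ε' := by first | exact hi | rwa [dist_comm] at hi
    have h3 : Fr p = f ↑p := by
      simp [hFr]
    rw [h3, Real.dist_eq] at h1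
    rw [abs_sub_comm]
    linarith
  have hgu : ∀ p : (sr r : Set (X × (ℕ → E))), (g r i) ↑p = u r i p := hg1 r i
  have hgb : ∀ q, |(g r i) q| ≤ M + ε' := by
    refine hg2 r i (M + ε') (by linarith) fun p => ?_
    have h1 := hclose p
    have h2 : |f ↑p| ≤ M := by
      rw [← Real.norm_eq_abs]; exact f.norm_coe_le_norm _
    have := abs_sub_le (u r i p) (f ↑p) 0
    simp only [sub_zero] at this
    linarith
  -- uniform-continuity modulus in the shift coordinates
  obtain ⟨k0, hmod⟩ : ∃ k0 : ℕ, ∀ (p q : (sr r : Set (X × (ℕ → E)))),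
      (p : X × (ℕ → E)).1 = (q : X × (ℕ → E)).1 →
      (∀ j < k0, (p : X × (ℕ → E)).2 j = (q : X × (ℕ → E)).2 j) →
      |u r i p - u r i q| ≤ ε' := by
    have hUC : UniformContinuous (u r i) :=
      CompactSpace.uniformContinuous_of_continuous (u r i).continuous
    have hV : {z : ℝ × ℝ | dist z.1 z.2 < ε'} ∈ 𝓤 ℝ := Metric.dist_mem_uniformity hε'0
    have hW := hUC hV
    rw [uniformity_subtype] at hW
    obtain ⟨U, hU, hUsub⟩ := Filter.mem_comap.1 hW
    rw [uniformity_prod_eq_comap_prod] at hU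
    obtain ⟨T, hT, hTsub⟩ := Filter.mem_comap.1 hU
    obtain ⟨U₁, hU₁, U₂, hU₂, hprodsub⟩ := Filter.mem_prod_iff.1 hT
    rw [Pi.uniformity] at hU₂
    obtain ⟨I, hIfin, V, hV1, hV2, hU₂eq, -⟩ := Filter.mem_iInf'.1 hU₂
    obtain ⟨k0, hk0⟩ : ∃ k0 : ℕ, ∀ j ∈ I, j < k0 := by
      rcases Set.Finite.bddAbove hIfin with ⟨k1, hk1⟩
      exact ⟨k1 + 1, fun j hj => Nat.lt_succ_of_le (hk1 hj)⟩
    refine ⟨k0, fun p q hp1 hp2 => ?_⟩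
    have hpq2 : (((p : X × (ℕ → E)).2, (q : X × (ℕ → E)).2) : (ℕ → E) × (ℕ → E)) ∈ U₂ := by
      rw [hU₂eq]
      refine Set.mem_iInter₂.2 fun j hj => ?_
      obtain ⟨Wj, hWj, hWsub⟩ := Filter.mem_comap.1 (hV1 j)
      refine hWsub ?_
      have hjj : (p : X × (ℕ → E)).2 j = (q : X × (ℕ → E)).2 j := hp2 j (hk0 j hj)
      simp only [Set.mem_preimage, hjj]
      exact refl_mem_uniformity hWj
    have hpq1 : (((p : X × (ℕ → E)).1, (q : X × (ℕ → E)).1) : X × X) ∈ U₁ := by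
      rw [hp1]; exact refl_mem_uniformity hU₁
    have hpqT : ((((p : X × (ℕ → E)).1, (q : X × (ℕ → E)).1),
        ((p : X × (ℕ → E)).2, (q : X × (ℕ → E)).2)) : (X × X) × ((ℕ → E) × (ℕ → E))) ∈ T :=
      hprodsub (Set.mk_mem_prod hpq1 hpq2)
    have hpqU : (((p : X × (ℕ → E)), (q : X × (ℕ → E))) : (X × (ℕ → E)) × (X × (ℕ → E))) ∈ U :=
      hTsub hpqT
    have hfin := hUsub (show ((p, q) : (↥(sr r)) × (↥(sr r))) ∈
      (fun q : (↥(sr r)) × (↥(sr r)) => ((q.1 : X × (ℕ → E)), (q.2 : X × (ℕ → E)))) ⁻¹' U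
      from hpqU)
    have : dist (u r i p) (u r i q) < ε' := hfin
    rw [Real.dist_eq] at this
    exact le_of_lt this
  -- key pointwise estimate
  have hE1 : ∀ (y : X) (c : ℕ → E),
      |f (y, c) - (g r i) (y, trunc e₀ k0 c)| ≤ 2*ε' + (2*M+1) * f0 y := by
    intro y c
    have hf0y := hf0mem y
    by_cases hy : y ∈ K r
    · have hmem1 : ((y, c) : X × (ℕ → E)) ∈ sr r := Set.mk_mem_prod hy trivial
      have hmem2 : ((y, trunc e₀ k0 c) : X × (ℕ → E)) ∈ sr r := Set.mk_mem_prod hy trivial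
      have e1 : (g r i) (y, trunc e₀ k0 c) = u r i ⟨(y, trunc e₀ k0 c), hmem2⟩ :=
        hgu ⟨(y, trunc e₀ k0 c), hmem2⟩
      have e2 : |u r i ⟨(y, trunc e₀ k0 c), hmem2⟩ - u r i ⟨(y, c), hmem1⟩| ≤ ε' := by
        refine hmod _ _ rfl fun j hj => ?_
        simp [trunc, hj]
      have e3 : |u r i ⟨(y, c), hmem1⟩ - f (y, c)| ≤ ε' := hclose ⟨(y, c), hmem1⟩
      have htri : |f (y, c) - (g r i) (y, trunc e₀ k0 c)|
          ≤ |f (y, c) - u r i ⟨(y, c), hmem1⟩|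
            + |u r i ⟨(y, c), hmem1⟩ - u r i ⟨(y, trunc e₀ k0 c), hmem2⟩| := by
        rw [e1]
        exact abs_sub_le _ _ _
      rw [abs_sub_comm] at e3
      rw [abs_sub_comm] at e2
      have hnn : 0 ≤ (2*M+1) * f0 y := mul_nonneg (by linarith) hf0y.1
      linarith
    · have hf0y1 : f0 y = 1 := hf0out y hy
      have h1 : |f (y, c)| ≤ M := by rw [← Real.norm_eq_abs]; exact f.norm_coe_le_norm _
      have h2 := hgb (y, trunc e₀ k0 c)
      rw [hf0y1]
      have := abs_sub_le (f (y, c)) 0 ((g r i) (y, trunc e₀ k0 c))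
      simp only [sub_zero, zero_sub, abs_neg] at this
      linarith
  -- averaged estimate
  have hAvgDiff : ∀ᶠ (N : ℕ) in atTop,
      |(N : ℝ)⁻¹ * ∑ n ∈ Finset.range N, f (wordProd gmap b n • x₀, fun j => b (j + n))
        - (N : ℝ)⁻¹ * ∑ n ∈ Finset.range N,
            (g r i) (wordProd gmap b n • x₀, trunc e₀ k0 (fun j => b (j + n)))|
      ≤ 2*ε' + (2*M+1) * ((N : ℝ)⁻¹ * ∑ n ∈ Finset.range N, f0 (wordProd gmap b n • x₀)) := by
    filter_upwards [eventually_ge_atTop 1] with N hN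
    have hNpos : (0:ℝ) < (N:ℝ) := by
      have h0 : 0 < N := hN
      exact_mod_cast h0
    rw [← mul_sub, ← Finset.sum_sub_distrib, abs_mul, abs_inv, Nat.abs_cast]
    have hsum1 : |∑ n ∈ Finset.range N,
        (f (wordProd gmap b n • x₀, fun j => b (j + n))
          - (g r i) (wordProd gmap b n • x₀, trunc e₀ k0 (fun j => b (j + n))))|
        ≤ ∑ n ∈ Finset.range N,
          (2*ε' + (2*M+1) * f0 (wordProd gmap b n • x₀)) := by
      calc |∑ n ∈ Finset.range N, (f (wordProd gmap b n • x₀, fun j => b (j + n))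
              - (g r i) (wordProd gmap b n • x₀, trunc e₀ k0 (fun j => b (j + n))))|
          ≤ ∑ n ∈ Finset.range N, |f (wordProd gmap b n • x₀, fun j => b (j + n))
              - (g r i) (wordProd gmap b n • x₀, trunc e₀ k0 (fun j => b (j + n)))| :=
            Finset.abs_sum_le_sum_abs _ _
        _ ≤ ∑ n ∈ Finset.range N, (2*ε' + (2*M+1) * f0 (wordProd gmap b n • x₀)) :=
            Finset.sum_le_sum fun n _ => hE1 _ _
    calc (N:ℝ)⁻¹ * |∑ n ∈ Finset.range N,
            (f (wordProd gmap b n • x₀, fun j => b (j + n))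
              - (g r i) (wordProd gmap b n • x₀, trunc e₀ k0 (fun j => b (j + n))))|
        ≤ (N:ℝ)⁻¹ * ∑ n ∈ Finset.range N,
            (2*ε' + (2*M+1) * f0 (wordProd gmap b n • x₀)) :=
          mul_le_mul_of_nonneg_left hsum1 (by positivity)
      _ = 2*ε' + (2*M+1) * ((N : ℝ)⁻¹ * ∑ n ∈ Finset.range N,
            f0 (wordProd gmap b n • x₀)) := by
          rw [Finset.sum_add_distrib, Finset.sum_const, Finset.card_range, nsmul_eq_mul,
            ← Finset.mul_sum, mul_add, ← mul_assoc, inv_mul_cancel₀ hNpos.ne', one_mul]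
          ring
  -- integral estimate
  have hL : |∫ p, f p ∂(m.prod β) - ∫ p, (g r i) (p.1, trunc e₀ k0 p.2) ∂(m.prod β)|
      ≤ 2*ε' + (2*M+1) * ε' := by
    have hHcont : Continuous fun p : X × (ℕ → E) => (g r i) (p.1, trunc e₀ k0 p.2) :=
      (g r i).continuous.comp
        (continuous_fst.prodMk ((continuous_trunc e₀ k0).comp continuous_snd))
    have hint1 : Integrable (fun p : X × (ℕ → E) => f p) (m.prod β) := f.integrable _
    have hint2 : Integrable (fun p : X × (ℕ → E) => (g r i) (p.1, trunc e₀ k0 p.2))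
        (m.prod β) :=
      (integrable_const (M + ε')).mono' hHcont.aestronglyMeasurable
        (Filter.Eventually.of_forall fun p => by
          rw [Real.norm_eq_abs]; exact hgb _)
    have hintf0fst : Integrable (fun p : X × (ℕ → E) => f0 p.1) (m.prod β) :=
      (integrable_const (1:ℝ)).mono' (hf0cont.comp continuous_fst).aestronglyMeasurable
        (Filter.Eventually.of_forall fun p => by
          rw [Real.norm_eq_abs, abs_of_nonneg (hf0mem p.1).1]; exact (hf0mem p.1).2)
    have h1 : ∫ p, f p ∂(m.prod β) - ∫ p, (g r i) (p.1, trunc e₀ k0 p.2) ∂(m.prod β)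
        = ∫ p, (f p - (g r i) (p.1, trunc e₀ k0 p.2)) ∂(m.prod β) :=
      (integral_sub hint1 hint2).symm
    rw [h1]
    have h2 : ∫ p, f0 p.1 ∂(m.prod β) = ∫ y, f0 y ∂m := by
      rw [integral_prod _ hintf0fst]
      simp [measure_univ]
    calc |∫ p, (f p - (g r i) (p.1, trunc e₀ k0 p.2)) ∂(m.prod β)|
        ≤ ∫ p, |f p - (g r i) (p.1, trunc e₀ k0 p.2)| ∂(m.prod β) :=
          by simpa [Real.norm_eq_abs] using
            norm_integral_le_integral_norm (μ := m.prod β)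
              (fun p : X × (ℕ → E) => f p - (g r i) (p.1, trunc e₀ k0 p.2))
      _ ≤ ∫ p, (2*ε' + (2*M+1) * f0 p.1) ∂(m.prod β) := by
          refine integral_mono (hint1.sub hint2).abs
            ((integrable_const (2*ε')).add (hintf0fst.const_mul (2*M+1))) fun p => ?_
          exact hE1 p.1 p.2
      _ = 2*ε' + (2*M+1) * ∫ p, f0 p.1 ∂(m.prod β) := by
          rw [integral_add (integrable_const _) (hintf0fst.const_mul (2*M+1)),
            integral_const, integral_const_mul]
          simp [measure_univ]
      _ ≤ 2*ε' + (2*M+1) * ε' := by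
          rw [h2]
          have := mul_le_mul_of_nonneg_left hintf0 (by linarith : (0:ℝ) ≤ 2*M+1)
          linarith
  -- final combination
  have hHev : ∀ᶠ (N : ℕ) in atTop,
      |(N : ℝ)⁻¹ * ∑ n ∈ Finset.range N,
          (g r i) (wordProd gmap b n • x₀, trunc e₀ k0 (fun j => b (j + n)))
        - ∫ p, (g r i) (p.1, trunc e₀ k0 p.2) ∂(m.prod β)| < ε' := by
    have := Metric.tendsto_atTop.1 (havg r i k0) ε' hε'0
    obtain ⟨N₀, hN₀⟩ := this
    refine eventually_atTop.2 ⟨N₀, fun N hN => ?_⟩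
    have := hN₀ N hN
    rwa [Real.dist_eq] at this
  have hfinal : ∀ᶠ (N : ℕ) in atTop,
      dist ((N : ℝ)⁻¹ * ∑ n ∈ Finset.range N, f (wordProd gmap b n • x₀, fun j => b (j + n)))
        (∫ p, f p ∂(m.prod β)) < ε := by
    filter_upwards [hAvgDiff, hA, hHev] with N h1 h2 h3
    rw [Real.dist_eq]
    have hmul : (2*M+1) * ((N : ℝ)⁻¹ * ∑ n ∈ Finset.range N, f0 (wordProd gmap b n • x₀))
        ≤ (2*M+1) * (2*ε') := mul_le_mul_of_nonneg_left h2 (by linarith)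
    have htri1 : |(N : ℝ)⁻¹ * ∑ n ∈ Finset.range N,
          f (wordProd gmap b n • x₀, fun j => b (j + n)) - ∫ p, f p ∂(m.prod β)|
        ≤ |(N : ℝ)⁻¹ * ∑ n ∈ Finset.range N,
            f (wordProd gmap b n • x₀, fun j => b (j + n))
          - (N : ℝ)⁻¹ * ∑ n ∈ Finset.range N,
            (g r i) (wordProd gmap b n • x₀, trunc e₀ k0 (fun j => b (j + n)))|
        + |(N : ℝ)⁻¹ * ∑ n ∈ Finset.range N,
            (g r i) (wordProd gmap b n • x₀, trunc e₀ k0 (fun j => b (j + n)))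
          - ∫ p, f p ∂(m.prod β)| := abs_sub_le _ _ _
    have htri2 : |(N : ℝ)⁻¹ * ∑ n ∈ Finset.range N,
            (g r i) (wordProd gmap b n • x₀, trunc e₀ k0 (fun j => b (j + n)))
          - ∫ p, f p ∂(m.prod β)|
        ≤ |(N : ℝ)⁻¹ * ∑ n ∈ Finset.range N,
            (g r i) (wordProd gmap b n • x₀, trunc e₀ k0 (fun j => b (j + n)))
          - ∫ p, (g r i) (p.1, trunc e₀ k0 p.2) ∂(m.prod β)|
        + |∫ p, (g r i) (p.1, trunc e₀ k0 p.2) ∂(m.prod β) - ∫ p, f p ∂(m.prod β)| :=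
      abs_sub_le _ _ _
    have hLc : |∫ p, (g r i) (p.1, trunc e₀ k0 p.2) ∂(m.prod β) - ∫ p, f p ∂(m.prod β)|
        ≤ 2*ε' + (2*M+1) * ε' := by rw [abs_sub_comm]; exact hL
    have hgoal : |(N : ℝ)⁻¹ * ∑ n ∈ Finset.range N,
          f (wordProd gmap b n • x₀, fun j => b (j + n)) - ∫ p, f p ∂(m.prod β)|
        ≤ ε' * (6*M + 8) := by
      calc |(N : ℝ)⁻¹ * ∑ n ∈ Finset.range N,
            f (wordProd gmap b n • x₀, fun j => b (j + n)) - ∫ p, f p ∂(m.prod β)| ≤ _ := htri1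
        _ ≤ (2*ε' + (2*M+1) * (2*ε')) + (ε' + (2*ε' + (2*M+1) * ε')) := by
            have := le_trans h1 (by linarith : 2*ε' + (2*M+1) * ((N : ℝ)⁻¹ *
              ∑ n ∈ Finset.range N, f0 (wordProd gmap b n • x₀)) ≤ 2*ε' + (2*M+1) * (2*ε'))
            linarith [htri2, le_of_lt h3, hLc, this]
        _ = ε' * (6*M + 8) := by ring
    have : ε' * (6*M+8) < ε := by nlinarith [hε'0]
    linarith
  obtain ⟨N₀, hN₀⟩ := eventually_atTop.1 hfinal
  exact ⟨N₀, hN₀⟩
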